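/- Let (φ, ξ, η) be a smooth almost contact structure on U which is normal, i.e. N_φ(X,Y) = [φ,φ](X,Y) + dη(X,Y)·ξ = 0 for all smooth vector fields X, Y on U. Then φ[ξ, X] = [ξ, φX] for every smooth vector field X on U, where ξ is regarded as the smooth vector field x ↦ ξ_x. -/

import Mathlib

/-!
Evaluate the normality condition on the pair `(ξ, φX)`. Pointwise algebra gives `φξ = 0` and
`η ∘ φ = 0`, so the terms `[φξ, ·]` and `ξ(η(φX))` vanish and `ξ(η(ξ)) = 0`. Since
`φ(φX) = η(X) ξ − X`, the bracket `[ξ, φ(φX)]` is `−[ξ, X]` up to a multiple of `ξ`, which `φ`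
kills. What is left of `N_φ(ξ, φX)` is exactly `φ[ξ, X] − [ξ, φX]`.
-/

open VectorField

/-- The Nijenhuis tensor `N_φ(X,Y)` of a smooth almost contact structure `(φ, ξ, η)`
at a point `x`:
`N_φ(X,Y) = [φX, φY] + φ(φ[X,Y]) − φ[φX, Y] − φ[X, φY] + dη(X,Y)·ξ`, where
`dη(X,Y) = X(η(Y)) − Y(η(X)) − η([X,Y])`. -/
noncomputable def almostContactNijenhuis {E : Type*} [NormedAddCommGroup E]
    [NormedSpace ℝ E] (φ : E → (E →L[ℝ] E)) (ξ : E → E) (η : E → (E →L[ℝ] ℝ))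
    (X Y : E → E) (x : E) : E :=
  lieBracket ℝ (fun y => φ y (X y)) (fun y => φ y (Y y)) x
    + φ x (φ x (lieBracket ℝ X Y x))
    - φ x (lieBracket ℝ (fun y => φ y (X y)) Y x)
    - φ x (lieBracket ℝ X (fun y => φ y (Y y)) x)
    + (fderiv ℝ (fun y => η y (Y y)) x (X x)
        - fderiv ℝ (fun y => η y (X y)) x (Y x)
        - η x (lieBracket ℝ X Y x)) • ξ x

open Filter Topology

section AlmostContactAlgebra

variable {K V : Type*} [Field K] [AddCommGroup V] [Module K V]
  {φ : V →ₗ[K] V} {ξ : V} {η : V →ₗ[K] K}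

theorem almostContact_phi_xi (hηξ : η ξ = 1) (hφφ : ∀ v, φ (φ v) = -v + η v • ξ) :
    φ ξ = 0 := by
  have hφφξ : φ (φ ξ) = 0 := by rw [hφφ, hηξ, one_smul, neg_add_cancel]
  set a := η (φ ξ)
  have hφξ : φ ξ = a • ξ := by
    have h := hφφ (φ ξ)
    rw [hφφξ, map_zero, eq_comm, neg_add_eq_zero] at h
    exact h
  -- `φ (φ ξ) = 0` read through `φ ξ = a • ξ` says `a² • ξ = 0`
  have ha : a * a = 0 := by
    have h := congrArg η hφφξ
    rwa [hφξ, map_smul, hφξ, map_smul, map_smul, hηξ, map_zero, smul_eq_mul, smul_eq_mul,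
      mul_one] at h
  rw [hφξ, mul_self_eq_zero.1 ha, zero_smul]

theorem almostContact_eta_phi (hηξ : η ξ = 1) (hφφ : ∀ v, φ (φ v) = -v + η v • ξ) (v : V) :
    η (φ v) = 0 := by
  have h : φ (φ (φ v)) = -φ v + η (φ v) • ξ := hφφ (φ v)
  rw [hφφ v, map_add, map_neg, map_smul, almostContact_phi_xi hηξ hφφ, smul_zero, add_zero,
    left_eq_add] at h
  simpa [hηξ] using congrArg η h

end AlmostContactAlgebra

section LieBracket

variable {𝕜 E : Type*} [NontriviallyNormedField 𝕜] [NormedAddCommGroup E] [NormedSpace 𝕜 E]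
  {V W W₁ : E → E} {x : E}

theorem lieBracket_sub_right (hW : DifferentiableAt 𝕜 W x) (hW₁ : DifferentiableAt 𝕜 W₁ x) :
    lieBracket 𝕜 V (fun y => W y - W₁ y) x = lieBracket 𝕜 V W x - lieBracket 𝕜 V W₁ x := by
  simp only [lieBracket, fderiv_fun_sub hW hW₁, sub_apply, map_sub]
  abel

theorem lieBracket_eq_zero_of_eventuallyEq_zero_left (hV : V =ᶠ[𝓝 x] 0) :
    lieBracket 𝕜 V W x = 0 := by
  rw [hV.lieBracket_vectorField_eq (EventuallyEq.refl _ W), lieBracket_zero_left,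
    Pi.zero_apply]

end LieBracket

theorem fderiv_eq_zero_of_eventuallyEq_const {𝕜 E F : Type*} [NontriviallyNormedField 𝕜]
    [NormedAddCommGroup E] [NormedSpace 𝕜 E] [NormedAddCommGroup F] [NormedSpace 𝕜 F]
    {f : E → F} {x : E} {c : F} (h : f =ᶠ[𝓝 x] fun _ => c) : fderiv 𝕜 f x = 0 := by
  rw [h.fderiv_eq, fderiv_const_apply]

section AlmostContactStructure

variable {E : Type*} [NormedAddCommGroup E] [NormedSpace ℝ E]
  {φ : E → (E →L[ℝ] E)} {ξ X : E → E} {η : E → (E →L[ℝ] ℝ)} {x : E}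

theorem lieBracket_xi_phi_phi (hφφ : ∀ᶠ y in 𝓝 x, ∀ v, φ y (φ y v) = -v + η y v • ξ y)
    (hξ : DifferentiableAt ℝ ξ x) (hX : DifferentiableAt ℝ X x)
    (hηX : DifferentiableAt ℝ (fun y => η y (X y)) x) :
    lieBracket ℝ ξ (fun y => φ y (φ y (X y))) x
      = fderiv ℝ (fun y => η y (X y)) x (ξ x) • ξ x - lieBracket ℝ ξ X x := by
  have hφφX : (fun y => φ y (φ y (X y))) =ᶠ[𝓝 x] fun y => η y (X y) • ξ y - X y := by
    filter_upwards [hφφ] with y hy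
    rw [hy, neg_add_eq_sub]
  rw [(EventuallyEq.refl _ ξ).lieBracket_vectorField_eq hφφX,
    lieBracket_sub_right (hηX.fun_smul hξ) hX, lieBracket_smul_right hηX hξ, lieBracket_self,
    Pi.zero_apply, smul_zero, add_zero]

theorem almostContactNijenhuis_xi_phi (hηξ : ∀ᶠ y in 𝓝 x, η y (ξ y) = 1)
    (hφφ : ∀ᶠ y in 𝓝 x, ∀ v, φ y (φ y v) = -v + η y v • ξ y)
    (hξ : DifferentiableAt ℝ ξ x) (hX : DifferentiableAt ℝ X x)
    (hηX : DifferentiableAt ℝ (fun y => η y (X y)) x) :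
    almostContactNijenhuis φ ξ η ξ (fun y => φ y (X y)) x
      = φ x (lieBracket ℝ ξ X x) - lieBracket ℝ ξ (fun y => φ y (X y)) x := by
  have hφξ : (fun y => φ y (ξ y)) =ᶠ[𝓝 x] 0 := by
    filter_upwards [hηξ, hφφ] with y h₁ h₂
    exact almostContact_phi_xi (φ := (φ y : E →ₗ[ℝ] E)) (η := (η y : E →ₗ[ℝ] ℝ)) h₁ h₂
  have hηφX : (fun y => η y (φ y (X y))) =ᶠ[𝓝 x] fun _ => 0 := by
    filter_upwards [hηξ, hφφ] with y h₁ h₂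
    exact almostContact_eta_phi (φ := (φ y : E →ₗ[ℝ] E)) (η := (η y : E →ₗ[ℝ] ℝ)) h₁ h₂ _
  have hφξx : φ x (ξ x) = 0 := hφξ.self_of_nhds
  unfold almostContactNijenhuis
  rw [lieBracket_eq_zero_of_eventuallyEq_zero_left hφξ,
    lieBracket_eq_zero_of_eventuallyEq_zero_left hφξ,
    lieBracket_xi_phi_phi hφφ hξ hX hηX, hφφ.self_of_nhds,
    fderiv_eq_zero_of_eventuallyEq_const hηφX, fderiv_eq_zero_of_eventuallyEq_const hηξ]
  simp only [map_sub, map_smul, hφξx, map_zero, smul_zero, zero_apply]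
  module

end AlmostContactStructure

theorem normal_almostContact_phi_lieBracket_xi_general
    {E : Type*} [NormedAddCommGroup E] [NormedSpace ℝ E]
    (U : Set E) (hU : IsOpen U)
    (φ : E → (E →L[ℝ] E)) (ξ : E → E) (η : E → (E →L[ℝ] ℝ))
    (hφ : ContDiffOn ℝ (⊤ : ℕ∞) φ U) (hξ : ContDiffOn ℝ (⊤ : ℕ∞) ξ U)
    (hη : ContDiffOn ℝ (⊤ : ℕ∞) η U)
    (hηξ : ∀ x ∈ U, η x (ξ x) = 1)
    (hφφ : ∀ x ∈ U, ∀ v : E, φ x (φ x v) = -v + η x v • ξ x)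
    (hnormal : ∀ X Y : E → E, ContDiffOn ℝ (⊤ : ℕ∞) X U → ContDiffOn ℝ (⊤ : ℕ∞) Y U →
      ∀ x ∈ U, almostContactNijenhuis φ ξ η X Y x = 0) :
    ∀ X : E → E, ContDiffOn ℝ (⊤ : ℕ∞) X U → ∀ x ∈ U,
      φ x (lieBracket ℝ ξ X x) = lieBracket ℝ ξ (fun y => φ y (X y)) x := by
  intro X hX x hx
  have hUx : U ∈ 𝓝 x := hU.mem_nhds hx
  have hN := almostContactNijenhuis_xi_phi (X := X) (φ := φ)
    (eventually_of_mem hUx hηξ) (eventually_of_mem hUx hφφ)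
    ((hξ.contDiffAt hUx).differentiableAt (by simp))
    ((hX.contDiffAt hUx).differentiableAt (by simp))
    (((hη.clm_apply hX).contDiffAt hUx).differentiableAt (by simp))
  rw [hnormal ξ _ hξ (hφ.clm_apply hX) x hx] at hN
  exact sub_eq_zero.1 hN.symm

/-- If a smooth almost contact structure `(φ, ξ, η)` on an open set `U` is normal,
then `φ[ξ, X] = [ξ, φX]` for every smooth vector field `X` on `U`. -/
theorem normal_almostContact_phi_lieBracket_xi
    {E : Type*} [NormedAddCommGroup E] [NormedSpace ℝ E] [FiniteDimensional ℝ E]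
    (U : Set E) (hU : IsOpen U)
    (φ : E → (E →L[ℝ] E)) (ξ : E → E) (η : E → (E →L[ℝ] ℝ))
    (hφ : ContDiffOn ℝ (⊤ : ℕ∞) φ U) (hξ : ContDiffOn ℝ (⊤ : ℕ∞) ξ U)
    (hη : ContDiffOn ℝ (⊤ : ℕ∞) η U)
    (hηξ : ∀ x ∈ U, η x (ξ x) = 1)
    (hφφ : ∀ x ∈ U, ∀ v : E, φ x (φ x v) = -v + η x v • ξ x)
    (hnormal : ∀ X Y : E → E, ContDiffOn ℝ (⊤ : ℕ∞) X U → ContDiffOn ℝ (⊤ : ℕ∞) Y U →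
      ∀ x ∈ U, almostContactNijenhuis φ ξ η X Y x = 0) :
    ∀ X : E → E, ContDiffOn ℝ (⊤ : ℕ∞) X U → ∀ x ∈ U,
      φ x (lieBracket ℝ ξ X x) = lieBracket ℝ ξ (fun y => φ y (X y)) x :=
  normal_almostContact_phi_lieBracket_xi_general U hU φ ξ η hφ hξ hη hηξ hφφ hnormal
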